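/- For N ≥ 0, let C^{1,N} be the set of tuples (a_0, a_1, …, a_N; b_1, …, b_N) ∈ {0,1}^{2N+1} (with the conventions a_i = b_i = 0 for i ≥ N+1 and b_0 = 0) satisfying: (1) b_{i+1} + a_{i+1} + a_i ≤ 1 and b_{i+1} + b_i + a_i ≤ 1 for all i ≥ 0; (2) for every i with 1 ≤ i ≤ N and b_i = 1, there exists j with i < j ≤ N such that a_j = 1 and b_s = 0 for all s with i+1 ≤ s ≤ j; and (3) there exists j with 0 ≤ j ≤ N such that a_j = 1 and b_s = 0 for all s with 1 ≤ s ≤ j. Then the cardinality of C^{1,N} is 2^N. -/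

import Mathlib

inductive C1St where
  | t0 | f0 | fa | tb
deriving DecidableEq

open C1St

def c1step : ℕ × ℕ → C1St → Option C1St
  | (0,0), .t0 => some .t0
  | (0,0), .f0 => some .f0
  | (0,0), .fa => some .f0
  | (0,0), .tb => some .t0
  | (1,0), .t0 => some .fa
  | (1,0), .f0 => some .fa
  | (1,0), .tb => some .fa
  | (0,1), .f0 => some .tb
  | _, _ => none

def c1run (t : (ℕ → ℕ) × (ℕ → ℕ)) : ℕ → Option C1St
  | 0 => some .t0
  | n+1 => (c1run t n).bind (c1step (t.1 n, t.2 n))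

lemma c1step_letter {l : ℕ × ℕ} {s s' : C1St} (h : c1step l s = some s') :
    l = (0,0) ∨ l = (1,0) ∨ l = (0,1) := by
  obtain ⟨a, b⟩ := l
  rcases a with _ | _ | a <;> rcases b with _ | _ | b <;> rcases s with _ | _ | _ | _ <;>
    simp_all [c1step]

lemma c1step_fa {l : ℕ × ℕ} {s s' : C1St} (h : c1step l s = some s') :
    (s' = .fa ↔ l = (1,0)) ∧ (s' = .tb ↔ l = (0,1)) := by
  rcases c1step_letter h with h1 | h1 | h1 <;> subst h1 <;>
    rcases s with _ | _ | _ | _ <;> simp only [c1step] at h <;>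
    first
      | (rw [Option.some_inj] at h; subst h; exact ⟨by decide, by decide⟩)
      | exact absurd h (by simp)

lemma c1run_succ {t : (ℕ → ℕ) × (ℕ → ℕ)} {n : ℕ} {s' : C1St}
    (h : c1run t (n+1) = some s') :
    ∃ s, c1run t n = some s ∧ c1step (t.1 n, t.2 n) s = some s' := by
  have := h
  rw [c1run] at this
  exact Option.bind_eq_some_iff.mp this

lemma c1run_mono {t : (ℕ → ℕ) × (ℕ → ℕ)} {n : ℕ} {s' : C1St}
    (h : c1run t n = some s') : ∀ m ≤ n, ∃ s, c1run t m = some s := by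
  induction n generalizing s' with
  | zero => intro m hm; interval_cases m; exact ⟨s', h⟩
  | succ k ih =>
    intro m hm
    obtain ⟨s, hs, _⟩ := c1run_succ h
    rcases Nat.lt_or_ge m (k+1) with h1 | h1
    · exact ih hs m (Nat.lt_succ_iff.mp h1)
    · have : m = k + 1 := le_antisymm hm h1
      exact ⟨s', this ▸ h⟩

lemma c1run_valid {t : (ℕ → ℕ) × (ℕ → ℕ)} {n : ℕ} {s' : C1St}
    (h : c1run t n = some s') : ∀ i < n,
      (t.1 i = 0 ∧ t.2 i = 0) ∨ (t.1 i = 1 ∧ t.2 i = 0) ∨ (t.1 i = 0 ∧ t.2 i = 1) := by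
  induction n generalizing s' with
  | zero => omega
  | succ k ih =>
    intro i hi
    obtain ⟨s, hs, hstep⟩ := c1run_succ h
    rcases Nat.lt_or_ge i k with h1 | h1
    · exact ih hs i h1
    · have hik : i = k := by omega
      subst hik
      rcases c1step_letter hstep with h2 | h2 | h2 <;>
        [left; (right; left); (right; right)] <;>
        exact ⟨congrArg Prod.fst h2, congrArg Prod.snd h2⟩

lemma c1run_congr {t t' : (ℕ → ℕ) × (ℕ → ℕ)} {n : ℕ}
    (h1 : ∀ i < n, t.1 i = t'.1 i) (h2 : ∀ i < n, t.2 i = t'.2 i) :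
    c1run t n = c1run t' n := by
  induction n with
  | zero => rfl
  | succ k ih =>
    rw [c1run, c1run, ih (fun i hi => h1 i (by omega)) (fun i hi => h2 i (by omega)),
      h1 k (by omega), h2 k (by omega)]

lemma c1run_state {t : (ℕ → ℕ) × (ℕ → ℕ)} {n : ℕ} {s' : C1St}
    (h : c1run t (n+1) = some s') :
    (s' = .fa ↔ t.1 n = 1) ∧ (s' = .tb ↔ t.2 n = 1) := by
  obtain ⟨s, hs, hstep⟩ := c1run_succ h
  obtain ⟨h1, h2⟩ := c1step_fa hstep
  have hv : (t.1 n = 0 ∧ t.2 n = 0) ∨ (t.1 n = 1 ∧ t.2 n = 0) ∨ (t.1 n = 0 ∧ t.2 n = 1) := by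
    rcases c1step_letter hstep with h3 | h3 | h3 <;>
      [left; (right; left); (right; right)] <;>
      exact ⟨congrArg Prod.fst h3, congrArg Prod.snd h3⟩
  constructor
  · rw [h1]
    constructor
    · intro hl; exact congrArg Prod.fst hl
    · intro hl
      have : t.2 n = 0 := by rcases hv with ⟨u,v⟩|⟨u,v⟩|⟨u,v⟩ <;> omega
      exact Prod.ext hl this
  · rw [h2]
    constructor
    · intro hl; exact congrArg Prod.snd hl
    · intro hl
      have : t.1 n = 0 := by rcases hv with ⟨u,v⟩|⟨u,v⟩|⟨u,v⟩ <;> omega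
      exact Prod.ext this hl

def c1P (n : ℕ) (s : C1St) (t : (ℕ → ℕ) × (ℕ → ℕ)) : Prop :=
  (∀ i, n ≤ i → t.1 i = 0) ∧ (∀ i, n ≤ i → t.2 i = 0) ∧ c1run t n = some s

def c1A (n : ℕ) (s : C1St) : Type := {t : (ℕ → ℕ) × (ℕ → ℕ) // c1P n s t}

def c1letter : C1St → ℕ × ℕ
  | .t0 => (0,0) | .f0 => (0,0) | .fa => (1,0) | .tb => (0,1)

lemma c1step_letter_det {l : ℕ × ℕ} {s s' : C1St} (h : c1step l s = some s') :
    l = c1letter s' := by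
  rcases c1step_letter h with rfl | rfl | rfl <;>
    rcases s with _ | _ | _ | _ <;> simp only [c1step] at h <;>
    first
      | (rw [Option.some_inj] at h; subst h; rfl)
      | exact absurd h (by simp)

def c1ext (n : ℕ) (l : ℕ × ℕ) (t : (ℕ → ℕ) × (ℕ → ℕ)) : (ℕ → ℕ) × (ℕ → ℕ) :=
  (fun i => if i = n then l.1 else t.1 i, fun i => if i = n then l.2 else t.2 i)

def c1trunc (n : ℕ) (t : (ℕ → ℕ) × (ℕ → ℕ)) : (ℕ → ℕ) × (ℕ → ℕ) :=
  (fun i => if i < n then t.1 i else 0, fun i => if i < n then t.2 i else 0)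

lemma c1P_ext {n : ℕ} {s s' : C1St} {l : ℕ × ℕ} {t : (ℕ → ℕ) × (ℕ → ℕ)}
    (h : c1P n s t) (hst : c1step l s = some s') : c1P (n+1) s' (c1ext n l t) := by
  obtain ⟨h1, h2, h3⟩ := h
  refine ⟨?_, ?_, ?_⟩
  · intro i hi; simp only [c1ext, if_neg (by omega : ¬ i = n)]; exact h1 i (by omega)
  · intro i hi; simp only [c1ext, if_neg (by omega : ¬ i = n)]; exact h2 i (by omega)
  · rw [c1run]
    have : c1run (c1ext n l t) n = c1run t n := by
      apply c1run_congr <;> intro i hi <;> simp [c1ext, if_neg (by omega : ¬ i = n)]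
    rw [this, h3]
    simp only [Option.bind_some, c1ext, if_pos rfl]
    exact hst

lemma c1P_trunc {n : ℕ} {s s' : C1St} {t : (ℕ → ℕ) × (ℕ → ℕ)}
    (h : c1P (n+1) s' t) (hs : c1run t n = some s) : c1P n s (c1trunc n t) := by
  refine ⟨?_, ?_, ?_⟩
  · intro i hi; simp [c1trunc, if_neg (by omega : ¬ i < n)]
  · intro i hi; simp [c1trunc, if_neg (by omega : ¬ i < n)]
  · have : c1run (c1trunc n t) n = c1run t n := by
      apply c1run_congr <;> intro i hi <;> simp [c1trunc, if_pos hi]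
    rw [this, hs]

lemma c1ext_trunc {n : ℕ} {s' : C1St} {l : ℕ × ℕ} {t : (ℕ → ℕ) × (ℕ → ℕ)}
    (h : c1P (n+1) s' t) (hl : (t.1 n, t.2 n) = l) :
    c1ext n l (c1trunc n t) = t := by
  have hl1 : t.1 n = l.1 := by rw [← hl]
  have hl2 : t.2 n = l.2 := by rw [← hl]
  refine Prod.ext (funext fun i => ?_) (funext fun i => ?_) <;>
    simp only [c1ext, c1trunc]
  · rcases Nat.lt_trichotomy i n with hi | rfl | hi
    · rw [if_neg (by omega), if_pos hi]
    · rw [if_pos rfl, hl1]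
    · rw [if_neg (by omega), if_neg (by omega)]
      exact (h.1 i (by omega)).symm
  · rcases Nat.lt_trichotomy i n with hi | rfl | hi
    · rw [if_neg (by omega), if_pos hi]
    · rw [if_pos rfl, hl2]
    · rw [if_neg (by omega), if_neg (by omega)]
      exact (h.2.1 i (by omega)).symm

lemma c1ext_inj {n : ℕ} {s s₂ : C1St} {l : ℕ × ℕ} {t t₂ : (ℕ → ℕ) × (ℕ → ℕ)}
    (h : c1P n s t) (h₂ : c1P n s₂ t₂) (he : c1ext n l t = c1ext n l t₂) :
    t = t₂ ∧ s = s₂ := by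
  have ht : t = t₂ := by
    refine Prod.ext (funext fun i => ?_) (funext fun i => ?_)
    · rcases eq_or_ne i n with rfl | hi
      · rw [h.1 i le_rfl, h₂.1 i le_rfl]
      · have := congrFun (congrArg Prod.fst he) i
        simpa only [c1ext, if_neg hi] using this
    · rcases eq_or_ne i n with rfl | hi
      · rw [h.2.1 i le_rfl, h₂.2.1 i le_rfl]
      · have := congrFun (congrArg Prod.snd he) i
        simpa only [c1ext, if_neg hi] using this
  refine ⟨ht, ?_⟩
  have := h.2.2
  rw [ht, h₂.2.2] at this
  exact (Option.some_inj.mp this).symm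

lemma c1P_valid {n : ℕ} {s : C1St} {t : (ℕ → ℕ) × (ℕ → ℕ)} (h : c1P n s t) :
    ∀ i, (t.1 i = 0 ∧ t.2 i = 0) ∨ (t.1 i = 1 ∧ t.2 i = 0) ∨ (t.1 i = 0 ∧ t.2 i = 1) := by
  intro i
  rcases Nat.lt_or_ge i n with hi | hi
  · exact c1run_valid h.2.2 i hi
  · exact Or.inl ⟨h.1 i hi, h.2.1 i hi⟩

instance c1A_finite (n : ℕ) (s : C1St) : Finite (c1A n s) := by
  have hinj : Function.Injective (fun (t : c1A n s) (i : Fin n) =>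
      ((decide (t.val.1 i = 1)), (decide (t.val.2 i = 1)))) := by
    intro t t₂ he
    apply Subtype.ext
    refine Prod.ext (funext fun i => ?_) (funext fun i => ?_)
    · rcases Nat.lt_or_ge i n with hi | hi
      · have := congrFun he ⟨i, hi⟩
        have h1 := congrArg Prod.fst this
        simp only [decide_eq_decide] at h1
        rcases c1P_valid t.prop i with ⟨u,v⟩|⟨u,v⟩|⟨u,v⟩ <;>
          rcases c1P_valid t₂.prop i with ⟨u2,v2⟩|⟨u2,v2⟩|⟨u2,v2⟩ <;> omega
      · rw [t.prop.1 i hi, t₂.prop.1 i hi]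
    · rcases Nat.lt_or_ge i n with hi | hi
      · have := congrFun he ⟨i, hi⟩
        have h1 := congrArg Prod.snd this
        simp only [decide_eq_decide] at h1
        rcases c1P_valid t.prop i with ⟨u,v⟩|⟨u,v⟩|⟨u,v⟩ <;>
          rcases c1P_valid t₂.prop i with ⟨u2,v2⟩|⟨u2,v2⟩|⟨u2,v2⟩ <;> omega
      · rw [t.prop.2.1 i hi, t₂.prop.2.1 i hi]
  exact Finite.of_injective _ hinj

lemma c1card_fa (n : ℕ) :
    Nat.card (c1A (n+1) .fa) =
      Nat.card (c1A n .t0) + Nat.card (c1A n .f0) + Nat.card (c1A n .tb) := by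
  classical
  let F : c1A n .t0 ⊕ c1A n .f0 ⊕ c1A n .tb → c1A (n+1) .fa := fun x =>
    match x with
    | .inl t => ⟨c1ext n (1,0) t.val, c1P_ext t.prop (by decide)⟩
    | .inr (.inl t) => ⟨c1ext n (1,0) t.val, c1P_ext t.prop (by decide)⟩
    | .inr (.inr t) => ⟨c1ext n (1,0) t.val, c1P_ext t.prop (by decide)⟩
  have hbij : Function.Bijective F := by
    constructor
    · intro x y h
      rcases x with t | t | t <;> rcases y with t₂ | t₂ | t₂ <;>
        (obtain ⟨ht, hs⟩ := c1ext_inj t.prop t₂.prop (Subtype.ext_iff.mp h)) <;>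
        first
          | exact absurd hs (by decide)
          | (cases Subtype.ext ht; rfl)
    · intro t'
      obtain ⟨s, hs, hstep⟩ := c1run_succ t'.prop.2.2
      have hl : (t'.val.1 n, t'.val.2 n) = (1,0) := c1step_letter_det hstep
      rw [hl] at hstep
      rcases s with _ | _ | _ | _
      · exact ⟨.inl ⟨c1trunc n t'.val, c1P_trunc t'.prop hs⟩,
          Subtype.ext (c1ext_trunc t'.prop hl)⟩
      · exact ⟨.inr (.inl ⟨c1trunc n t'.val, c1P_trunc t'.prop hs⟩),
          Subtype.ext (c1ext_trunc t'.prop hl)⟩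
      · exact absurd hstep (by decide)
      · exact ⟨.inr (.inr ⟨c1trunc n t'.val, c1P_trunc t'.prop hs⟩),
          Subtype.ext (c1ext_trunc t'.prop hl)⟩
  rw [← Nat.card_eq_of_bijective F hbij, Nat.card_sum, Nat.card_sum]
  omega

lemma c1card_t0 (n : ℕ) :
    Nat.card (c1A (n+1) .t0) = Nat.card (c1A n .t0) + Nat.card (c1A n .tb) := by
  classical
  let F : c1A n .t0 ⊕ c1A n .tb → c1A (n+1) .t0 := fun x =>
    match x with
    | .inl t => ⟨c1ext n (0,0) t.val, c1P_ext t.prop (by decide)⟩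
    | .inr t => ⟨c1ext n (0,0) t.val, c1P_ext t.prop (by decide)⟩
  have hbij : Function.Bijective F := by
    constructor
    · intro x y h
      rcases x with t | t <;> rcases y with t₂ | t₂ <;>
        (obtain ⟨ht, hs⟩ := c1ext_inj t.prop t₂.prop (Subtype.ext_iff.mp h)) <;>
        first
          | exact absurd hs (by decide)
          | (cases Subtype.ext ht; rfl)
    · intro t'
      obtain ⟨s, hs, hstep⟩ := c1run_succ t'.prop.2.2
      have hl : (t'.val.1 n, t'.val.2 n) = (0,0) := c1step_letter_det hstep
      rw [hl] at hstep
      rcases s with _ | _ | _ | _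
      · exact ⟨.inl ⟨c1trunc n t'.val, c1P_trunc t'.prop hs⟩,
          Subtype.ext (c1ext_trunc t'.prop hl)⟩
      · exact absurd hstep (by decide)
      · exact absurd hstep (by decide)
      · exact ⟨.inr ⟨c1trunc n t'.val, c1P_trunc t'.prop hs⟩,
          Subtype.ext (c1ext_trunc t'.prop hl)⟩
  rw [← Nat.card_eq_of_bijective F hbij, Nat.card_sum]

lemma c1card_f0 (n : ℕ) :
    Nat.card (c1A (n+1) .f0) = Nat.card (c1A n .f0) + Nat.card (c1A n .fa) := by
  classical
  let F : c1A n .f0 ⊕ c1A n .fa → c1A (n+1) .f0 := fun x =>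
    match x with
    | .inl t => ⟨c1ext n (0,0) t.val, c1P_ext t.prop (by decide)⟩
    | .inr t => ⟨c1ext n (0,0) t.val, c1P_ext t.prop (by decide)⟩
  have hbij : Function.Bijective F := by
    constructor
    · intro x y h
      rcases x with t | t <;> rcases y with t₂ | t₂ <;>
        (obtain ⟨ht, hs⟩ := c1ext_inj t.prop t₂.prop (Subtype.ext_iff.mp h)) <;>
        first
          | exact absurd hs (by decide)
          | (cases Subtype.ext ht; rfl)
    · intro t'
      obtain ⟨s, hs, hstep⟩ := c1run_succ t'.prop.2.2
      have hl : (t'.val.1 n, t'.val.2 n) = (0,0) := c1step_letter_det hstep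
      rw [hl] at hstep
      rcases s with _ | _ | _ | _
      · exact absurd hstep (by decide)
      · exact ⟨.inl ⟨c1trunc n t'.val, c1P_trunc t'.prop hs⟩,
          Subtype.ext (c1ext_trunc t'.prop hl)⟩
      · exact ⟨.inr ⟨c1trunc n t'.val, c1P_trunc t'.prop hs⟩,
          Subtype.ext (c1ext_trunc t'.prop hl)⟩
      · exact absurd hstep (by decide)
  rw [← Nat.card_eq_of_bijective F hbij, Nat.card_sum]

lemma c1card_tb (n : ℕ) :
    Nat.card (c1A (n+1) .tb) = Nat.card (c1A n .f0) := by
  classical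
  let F : c1A n .f0 → c1A (n+1) .tb := fun t =>
    ⟨c1ext n (0,1) t.val, c1P_ext t.prop (by decide)⟩
  have hbij : Function.Bijective F := by
    constructor
    · intro t t₂ h
      obtain ⟨ht, hs⟩ := c1ext_inj t.prop t₂.prop (Subtype.ext_iff.mp h)
      exact Subtype.ext ht
    · intro t'
      obtain ⟨s, hs, hstep⟩ := c1run_succ t'.prop.2.2
      have hl : (t'.val.1 n, t'.val.2 n) = (0,1) := c1step_letter_det hstep
      rw [hl] at hstep
      rcases s with _ | _ | _ | _
      · exact absurd hstep (by decide)
      · exact ⟨⟨c1trunc n t'.val, c1P_trunc t'.prop hs⟩,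
          Subtype.ext (c1ext_trunc t'.prop hl)⟩
      · exact absurd hstep (by decide)
      · exact absurd hstep (by decide)
  exact (Nat.card_eq_of_bijective F hbij).symm

lemma c1card_zero_t0 : Nat.card (c1A 0 .t0) = 1 := by
  let z : c1A 0 C1St.t0 := ⟨((fun _ => 0), (fun _ => 0)), fun i _ => rfl, fun i _ => rfl, rfl⟩
  have huniq : ∀ a : c1A 0 .t0, a = z := by
    intro a
    apply Subtype.ext
    exact Prod.ext (funext fun i => a.prop.1 i (Nat.zero_le i))
      (funext fun i => a.prop.2.1 i (Nat.zero_le i))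
  haveI : Nonempty (c1A 0 .t0) := ⟨z⟩
  haveI : Subsingleton (c1A 0 .t0) := ⟨fun a b => (huniq a).trans (huniq b).symm⟩
  exact Nat.card_unique

lemma c1card_zero_ne (s : C1St) (h : s ≠ .t0) : Nat.card (c1A 0 s) = 0 := by
  haveI : IsEmpty (c1A 0 s) := ⟨fun a => by
    have := a.prop.2.2
    rw [c1run] at this
    exact h (Option.some_inj.mp this).symm⟩
  exact Nat.card_of_isEmpty

lemma c1card_main (n : ℕ) :
    Nat.card (c1A (n+1) .f0) + Nat.card (c1A (n+1) .fa) = 2 ^ n ∧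
    Nat.card (c1A (n+1) .fa) = Nat.card (c1A (n+1) .t0) + Nat.card (c1A (n+1) .tb) := by
  induction n with
  | zero =>
    rw [c1card_f0, c1card_fa, c1card_t0, c1card_tb, c1card_zero_t0,
      c1card_zero_ne .f0 (by decide), c1card_zero_ne .fa (by decide),
      c1card_zero_ne .tb (by decide)]
    exact ⟨rfl, rfl⟩
  | succ k ih =>
    obtain ⟨ih1, ih2⟩ := ih
    have h2 : (2:ℕ) ^ (k+1) = 2 ^ k + 2 ^ k := by ring
    constructor
    · rw [c1card_f0 (k+1), c1card_fa (k+1)]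
      omega
    · rw [c1card_fa (k+1), c1card_t0 (k+1), c1card_tb (k+1)]
      omega

lemma c1step_pend {l : ℕ × ℕ} {su st' : C1St} (hsu : su = .t0 ∨ su = .tb)
    (h : c1step l su = some st') :
    (l = (0,0) ∧ (st' = .t0 ∨ st' = .tb)) ∨ l = (1,0) := by
  rcases c1step_letter h with rfl | rfl | rfl <;> rcases hsu with rfl | rfl <;>
    simp only [c1step] at h <;>
    first | (rw [Option.some_inj] at h; subst h; decide) | exact absurd h (by simp)

lemma c1pend {t : (ℕ → ℕ) × (ℕ → ℕ)} :
    ∀ (k m : ℕ) (st st' : C1St), c1run t m = some st → (st = .t0 ∨ st = .tb) →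
    c1run t (m+k) = some st' →
    ((st' = .t0 ∨ st' = .tb) ∧ ∀ s, m ≤ s → s < m+k → t.2 s = 0) ∨
    (∃ j, m ≤ j ∧ j < m+k ∧ t.1 j = 1 ∧ ∀ s, m ≤ s → s ≤ j → t.2 s = 0) := by
  intro k
  induction k with
  | zero =>
    intro m st st' h1 h2 h3
    rw [Nat.add_zero] at h3
    rw [h1] at h3
    exact Or.inl ⟨(Option.some_inj.mp h3) ▸ h2, fun s hs1 hs2 => by omega⟩
  | succ k ih =>
    intro m st st' h1 h2 h3
    rw [show m + (k+1) = (m+k) + 1 from rfl] at h3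
    obtain ⟨su, hsu, hstep⟩ := c1run_succ h3
    rcases ih m st su h1 h2 hsu with ⟨hpend, hb⟩ | ⟨j, hj1, hj2, hj3, hj4⟩
    · rcases c1step_pend hpend hstep with ⟨hl, hpend'⟩ | hl
      · left
        refine ⟨hpend', fun s hs1 hs2 => ?_⟩
        rcases Nat.lt_or_ge s (m+k) with h | h
        · exact hb s hs1 h
        · have : s = m + k := by omega
          subst this
          exact congrArg Prod.snd hl
      · right
        refine ⟨m+k, by omega, by omega, congrArg Prod.fst hl, fun s hs1 hs2 => ?_⟩
        rcases Nat.lt_or_ge s (m+k) with h | h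
        · exact hb s hs1 h
        · have : s = m + k := by omega
          subst this
          exact congrArg Prod.snd hl
    · exact Or.inr ⟨j, hj1, by omega, hj3, hj4⟩

lemma c1step_from_fa {l : ℕ × ℕ} {s'' : C1St} (h : c1step l .fa = some s'') : l = (0,0) := by
  rcases c1step_letter h with rfl | rfl | rfl
  · rfl
  · exact absurd h (by simp [c1step])
  · exact absurd h (by simp [c1step])

lemma c1step_b_pred {l : ℕ × ℕ} {s s'' : C1St} (h : c1step l s = some s'') (hl : l = (0,1)) :
    s = .f0 := by
  subst hl
  rcases s with _ | _ | _ | _ <;> first | rfl | exact absurd h (by simp [c1step])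

lemma c1acc_to_H {N : ℕ} {t : (ℕ → ℕ) × (ℕ → ℕ)} {sacc : C1St}
    (hP : c1P (N+1) sacc t) (hacc : sacc = .f0 ∨ sacc = .fa) :
    (∀ i, t.1 i ≤ 1) ∧ (∀ i, t.2 i ≤ 1) ∧
      (∀ i, N + 1 ≤ i → t.1 i = 0) ∧ (∀ i, N + 1 ≤ i → t.2 i = 0) ∧ t.2 0 = 0 ∧
      (∀ i, t.2 (i + 1) + t.1 (i + 1) + t.1 i ≤ 1) ∧
      (∀ i, t.2 (i + 1) + t.2 i + t.1 i ≤ 1) ∧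
      (∀ i, 1 ≤ i → i ≤ N → t.2 i = 1 →
        ∃ j, i < j ∧ j ≤ N ∧ t.1 j = 1 ∧ ∀ s, i + 1 ≤ s → s ≤ j → t.2 s = 0) ∧
      (∃ j, j ≤ N ∧ t.1 j = 1 ∧ ∀ s, 1 ≤ s → s ≤ j → t.2 s = 0) := by
  obtain ⟨htail1, htail2, hrun⟩ := hP
  have hval := c1P_valid ⟨htail1, htail2, hrun⟩
  have hnp : ¬ (sacc = .t0 ∨ sacc = .tb) := by
    rcases hacc with rfl | rfl <;> rintro (h | h) <;> cases h
  refine ⟨?_, ?_, htail1, htail2, ?_, ?_, ?_, ?_, ?_⟩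
  · intro i; rcases hval i with ⟨u,v⟩|⟨u,v⟩|⟨u,v⟩ <;> omega
  · intro i; rcases hval i with ⟨u,v⟩|⟨u,v⟩|⟨u,v⟩ <;> omega
  · -- t.2 0 = 0
    by_contra hb
    have hb1 : t.2 0 = 1 := by rcases hval 0 with ⟨u,v⟩|⟨u,v⟩|⟨u,v⟩ <;> omega
    obtain ⟨s1, hs1⟩ := c1run_mono hrun 1 (by omega)
    obtain ⟨s0, hs0, hstep⟩ := c1run_succ hs1
    have : s0 = C1St.t0 := Option.some_inj.mp (by rw [← hs0]; rfl)
    subst this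
    have hl : (t.1 0, t.2 0) = ((0:ℕ), (1:ℕ)) := by
      rcases hval 0 with ⟨u,v⟩|⟨u,v⟩|⟨u,v⟩ <;> first | omega | exact Prod.ext u v
    rw [hl] at hstep
    exact absurd hstep (by simp [c1step])
  · -- triangle 1
    intro i
    by_cases ha : t.1 i = 1
    · have hiN : i ≤ N := by
        by_contra h
        exact absurd (htail1 i (by omega)) (by omega)
      by_cases hi1N : i + 1 ≤ N
      · obtain ⟨s2, hs2⟩ := c1run_mono hrun (i+2) (by omega)
        obtain ⟨s1, hs1, hstep⟩ := c1run_succ hs2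
        have hfa : s1 = .fa := ((c1run_state hs1).1).mpr ha
        subst hfa
        have := c1step_from_fa hstep
        have h1 : t.1 (i+1) = 0 := congrArg Prod.fst this
        have h2 : t.2 (i+1) = 0 := congrArg Prod.snd this
        omega
      · have h1 : t.1 (i+1) = 0 := htail1 (i+1) (by omega)
        have h2 : t.2 (i+1) = 0 := htail2 (i+1) (by omega)
        omega
    · have ha0 : t.1 i = 0 := by rcases hval i with ⟨u,v⟩|⟨u,v⟩|⟨u,v⟩ <;> omega
      rcases hval (i+1) with ⟨u,v⟩|⟨u,v⟩|⟨u,v⟩ <;> omega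
  · -- triangle 2
    intro i
    by_cases hb : t.2 (i+1) = 1
    · have hiN : i + 1 ≤ N := by
        by_contra h
        exact absurd (htail2 (i+1) (by omega)) (by omega)
      obtain ⟨s2, hs2⟩ := c1run_mono hrun (i+2) (by omega)
      obtain ⟨s1, hs1, hstep⟩ := c1run_succ hs2
      have hl : (t.1 (i+1), t.2 (i+1)) = ((0:ℕ), (1:ℕ)) := by
        rcases hval (i+1) with ⟨u,v⟩|⟨u,v⟩|⟨u,v⟩ <;> first | omega | exact Prod.ext u v
      have hf0 : s1 = .f0 := c1step_b_pred hstep hl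
      subst hf0
      have hfa := (c1run_state hs1).1
      have htb := (c1run_state hs1).2
      have h1 : t.1 i = 0 := by
        rcases hval i with ⟨u,v⟩|⟨u,v⟩|⟨u,v⟩ <;> first | omega | (exfalso; exact absurd (hfa.mpr u) (by decide))
      have h2 : t.2 i = 0 := by
        rcases hval i with ⟨u,v⟩|⟨u,v⟩|⟨u,v⟩ <;> first | omega | (exfalso; exact absurd (htb.mpr v) (by decide))
      omega
    · have hb0 : t.2 (i+1) = 0 := by rcases hval (i+1) with ⟨u,v⟩|⟨u,v⟩|⟨u,v⟩ <;> omega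
      rcases hval i with ⟨u,v⟩|⟨u,v⟩|⟨u,v⟩ <;> omega
  · -- condition (2)
    intro i h1i hiN hbi
    obtain ⟨s1, hs1⟩ := c1run_mono hrun (i+1) (by omega)
    have htb : s1 = .tb := ((c1run_state hs1).2).mpr hbi
    subst htb
    have hNi : (i+1) + (N-i) = N+1 := by omega
    have hrun' : c1run t ((i+1) + (N-i)) = some sacc := by rw [hNi]; exact hrun
    rcases c1pend (N-i) (i+1) .tb sacc hs1 (Or.inr rfl) hrun' with ⟨hpend, _⟩ | ⟨j, hj1, hj2, hj3, hj4⟩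
    · exact absurd hpend hnp
    · exact ⟨j, by omega, by omega, hj3, fun s u v => hj4 s u v⟩
  · -- condition (3)
    have hrun' : c1run t (0 + (N+1)) = some sacc := by rw [Nat.zero_add]; exact hrun
    rcases c1pend (N+1) 0 .t0 sacc rfl (Or.inl rfl) hrun' with ⟨hpend, _⟩ | ⟨j, hj1, hj2, hj3, hj4⟩
    · exact absurd hpend hnp
    · exact ⟨j, by omega, hj3, fun s u v => hj4 s (by omega) v⟩

def c1Done (t : (ℕ → ℕ) × (ℕ → ℕ)) (n : ℕ) : Prop :=
  ∃ j, j < n ∧ t.1 j = 1 ∧ ∀ s, j < s → s < n → t.2 s = 0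

open Classical in
noncomputable def c1sig (t : (ℕ → ℕ) × (ℕ → ℕ)) : ℕ → C1St
  | 0 => .t0
  | (m+1) => if t.1 m = 1 then .fa else if t.2 m = 1 then .tb
      else if c1Done t (m+1) then .f0 else .t0

lemma c1done_succ {t : (ℕ → ℕ) × (ℕ → ℕ)} (n : ℕ) :
    c1Done t (n+1) ↔ (t.1 n = 1 ∨ (t.2 n = 0 ∧ c1Done t n)) := by
  constructor
  · rintro ⟨j, hj, ha, hb⟩
    rcases Nat.lt_or_ge j n with h | h
    · exact Or.inr ⟨hb n h (by omega), ⟨j, h, ha, fun s u v => hb s u (by omega)⟩⟩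
    · have : j = n := by omega
      subst this
      exact Or.inl ha
  · rintro (ha | ⟨hb0, j, hj, ha, hb⟩)
    · exact ⟨n, by omega, ha, fun s u v => by omega⟩
    · refine ⟨j, by omega, ha, fun s u v => ?_⟩
      rcases Nat.lt_or_ge s n with h | h
      · exact hb s u h
      · have : s = n := by omega
        subst this
        exact hb0

lemma c1done_of {N : ℕ} {t : (ℕ → ℕ) × (ℕ → ℕ)}
    (h2 : ∀ i, t.2 i ≤ 1)
    (htail2 : ∀ i, N + 1 ≤ i → t.2 i = 0)
    (hb0 : t.2 0 = 0)
    (H8 : ∀ i, 1 ≤ i → i ≤ N → t.2 i = 1 →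
        ∃ j, i < j ∧ j ≤ N ∧ t.1 j = 1 ∧ ∀ s, i + 1 ≤ s → s ≤ j → t.2 s = 0)
    (H9 : ∃ j, j ≤ N ∧ t.1 j = 1 ∧ ∀ s, 1 ≤ s → s ≤ j → t.2 s = 0)
    (n : ℕ) (hn : 1 ≤ n) (hcase : t.2 n = 1 ∨ n = N + 1) : c1Done t n := by
  by_cases hex : ∃ i, i < n ∧ t.2 i = 1
  · obtain ⟨i, hi, hPi⟩ := hex
    set i0 := Nat.findGreatest (fun i => t.2 i = 1) (n-1) with hi0def
    have hspec : t.2 i0 = 1 :=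
      Nat.findGreatest_spec (P := fun i => t.2 i = 1) (m := i) (by omega) hPi
    have hgt : ∀ k, i0 < k → k ≤ n - 1 → ¬ (t.2 k = 1) := fun k u v =>
      Nat.findGreatest_is_greatest (P := fun i => t.2 i = 1) u v
    have hi0n : i0 ≤ n - 1 := Nat.findGreatest_le (P := fun i => t.2 i = 1) _
    have h1i0 : 1 ≤ i0 := by
      rcases Nat.eq_zero_or_pos i0 with h | h
      · rw [h] at hspec; omega
      · exact h
    have hi0N : i0 ≤ N := by
      by_contra h
      exact absurd (htail2 i0 (by omega)) (by omega)
    obtain ⟨j, hij, hjN, haj, hbj⟩ := H8 i0 h1i0 hi0N hspec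
    have hjn : j < n := by
      by_contra h
      rcases hcase with hc | hc
      · exact absurd (hbj n (by omega) (by omega)) (by omega)
      · omega
    refine ⟨j, hjn, haj, fun s u v => ?_⟩
    have := hgt s (by omega) (by omega)
    have := h2 s
    omega
  · push_neg at hex
    obtain ⟨j, hjN, haj, hbj⟩ := H9
    have hjn : j < n := by
      by_contra h
      rcases hcase with hc | hc
      · exact absurd (hbj n (by omega) (by omega)) (by omega)
      · omega
    refine ⟨j, hjn, haj, fun s u v => ?_⟩
    have := hex s v
    have := h2 s
    omega

lemma c1run_eq_sig {N : ℕ} {t : (ℕ → ℕ) × (ℕ → ℕ)}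
    (H : (∀ i, t.1 i ≤ 1) ∧ (∀ i, t.2 i ≤ 1) ∧
      (∀ i, N + 1 ≤ i → t.1 i = 0) ∧ (∀ i, N + 1 ≤ i → t.2 i = 0) ∧ t.2 0 = 0 ∧
      (∀ i, t.2 (i + 1) + t.1 (i + 1) + t.1 i ≤ 1) ∧
      (∀ i, t.2 (i + 1) + t.2 i + t.1 i ≤ 1) ∧
      (∀ i, 1 ≤ i → i ≤ N → t.2 i = 1 →
        ∃ j, i < j ∧ j ≤ N ∧ t.1 j = 1 ∧ ∀ s, i + 1 ≤ s → s ≤ j → t.2 s = 0) ∧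
      (∃ j, j ≤ N ∧ t.1 j = 1 ∧ ∀ s, 1 ≤ s → s ≤ j → t.2 s = 0)) :
    ∀ n, c1run t n = some (c1sig t n) := by
  obtain ⟨H1, H2, H3, H4, H5, H6, H7, H8, H9⟩ := H
  have hexcl : ∀ i, t.1 i + t.2 i ≤ 1 := by
    intro i
    have := H7 i
    omega
  intro n
  induction n with
  | zero => rfl
  | succ n ih =>
    rw [c1run, ih, Option.bind_some]
    have ha := H1 n
    have hb := H2 n
    have hab := hexcl n
    by_cases han : t.1 n = 1
    · have hbn : t.2 n = 0 := by omega
      rw [show (t.1 n, t.2 n) = ((1:ℕ),(0:ℕ)) from Prod.ext han hbn]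
      have hsig : c1sig t (n+1) = .fa := by simp [c1sig, han]
      rw [hsig]
      rcases n with _ | m
      · rfl
      · have ham : t.1 m = 0 := by have := H6 m; omega
        have hamne : ¬ t.1 m = 1 := by omega
        have hsplit : c1sig t (m+1) = .tb ∨ c1sig t (m+1) = .f0 ∨ c1sig t (m+1) = .t0 := by
          by_cases hbm : t.2 m = 1
          · exact Or.inl (by simp [c1sig, hamne, hbm])
          · by_cases hdm : c1Done t (m+1)
            · exact Or.inr (Or.inl (by simp [c1sig, hamne, hbm, hdm]))
            · exact Or.inr (Or.inr (by simp [c1sig, hamne, hbm, hdm]))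
        rcases hsplit with h1 | h1 | h1 <;> rw [h1] <;> rfl
    · by_cases hbn : t.2 n = 1
      · have han0 : t.1 n = 0 := by omega
        rw [show (t.1 n, t.2 n) = ((0:ℕ),(1:ℕ)) from Prod.ext han0 hbn]
        have hsig1 : c1sig t (n+1) = .tb := by simp [c1sig, han0, hbn]
        rw [hsig1]
        rcases n with _ | m
        · exfalso; omega
        · have ham : t.1 m = 0 := by have := H6 m; omega
          have hbm : t.2 m = 0 := by have := H7 m; omega
          have hdone : c1Done t (m+1) :=
            c1done_of H2 H4 H5 H8 H9 (m+1) (by omega) (Or.inl hbn)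
          have h1 : c1sig t (m+1) = .f0 := by simp [c1sig, ham, hbm, hdone]
          rw [h1]
          rfl
      · have han0 : t.1 n = 0 := by omega
        have hbn0 : t.2 n = 0 := by omega
        rw [show (t.1 n, t.2 n) = ((0:ℕ),(0:ℕ)) from Prod.ext han0 hbn0]
        have hdsucc : c1Done t (n+1) ↔ c1Done t n := by
          rw [c1done_succ]
          simp [han0, hbn0]
        by_cases hd : c1Done t (n+1)
        · have hsig2 : c1sig t (n+1) = .f0 := by simp [c1sig, han, hbn, hd]
          rw [hsig2]
          have hdn : c1Done t n := hdsucc.mp hd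
          rcases n with _ | m
          · exact absurd hdn (by rintro ⟨j, hj, -⟩; omega)
          · by_cases ham : t.1 m = 1
            · have h1 : c1sig t (m+1) = .fa := by simp [c1sig, ham]
              rw [h1]
              rfl
            · have hbm : ¬ t.2 m = 1 := by
                intro hbm
                rcases (c1done_succ m).mp hdn with h | ⟨h0, -⟩
                · exact ham h
                · omega
              have h1 : c1sig t (m+1) = .f0 := by simp [c1sig, ham, hbm, hdn]
              rw [h1]
              rfl
        · have hsig2 : c1sig t (n+1) = .t0 := by simp [c1sig, han, hbn, hd]
          rw [hsig2]
          have hdn : ¬ c1Done t n := fun h => hd (hdsucc.mpr h)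
          rcases n with _ | m
          · rfl
          · by_cases ham : t.1 m = 1
            · exact absurd (⟨m, by omega, ham, fun s u v => by omega⟩ : c1Done t (m+1)) hdn
            · by_cases hbm : t.2 m = 1
              · have h1 : c1sig t (m+1) = .tb := by simp [c1sig, ham, hbm]
                rw [h1]
                rfl
              · have h1 : c1sig t (m+1) = .t0 := by simp [c1sig, ham, hbm, hdn]
                rw [h1]
                rfl

lemma c1H_to_acc {N : ℕ} {t : (ℕ → ℕ) × (ℕ → ℕ)}
    (H : (∀ i, t.1 i ≤ 1) ∧ (∀ i, t.2 i ≤ 1) ∧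
      (∀ i, N + 1 ≤ i → t.1 i = 0) ∧ (∀ i, N + 1 ≤ i → t.2 i = 0) ∧ t.2 0 = 0 ∧
      (∀ i, t.2 (i + 1) + t.1 (i + 1) + t.1 i ≤ 1) ∧
      (∀ i, t.2 (i + 1) + t.2 i + t.1 i ≤ 1) ∧
      (∀ i, 1 ≤ i → i ≤ N → t.2 i = 1 →
        ∃ j, i < j ∧ j ≤ N ∧ t.1 j = 1 ∧ ∀ s, i + 1 ≤ s → s ≤ j → t.2 s = 0) ∧
      (∃ j, j ≤ N ∧ t.1 j = 1 ∧ ∀ s, 1 ≤ s → s ≤ j → t.2 s = 0)) :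
    c1P (N+1) .f0 t ∨ c1P (N+1) .fa t := by
  have hrun := c1run_eq_sig H (N+1)
  obtain ⟨H1, H2, H3, H4, H5, H6, H7, H8, H9⟩ := H
  by_cases haN : t.1 N = 1
  · right
    refine ⟨H3, H4, ?_⟩
    rw [hrun]
    congr 1
    simp [c1sig, haN]
  · have hbN : ¬ t.2 N = 1 := by
      intro hbN
      rcases Nat.eq_zero_or_pos N with h0 | h0
      · subst h0; omega
      · obtain ⟨j, hj1, hj2, -, -⟩ := H8 N (by omega) le_rfl hbN
        omega
    have hdone : c1Done t (N+1) :=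
      c1done_of H2 H4 H5 H8 H9 (N+1) (by omega) (Or.inr rfl)
    left
    refine ⟨H3, H4, ?_⟩
    rw [hrun]
    congr 1
    simp [c1sig, haN, hbN, hdone]

lemma c1card_acc (N : ℕ) :
    Nat.card {t : (ℕ → ℕ) × (ℕ → ℕ) // c1P (N+1) .f0 t ∨ c1P (N+1) .fa t} =
      Nat.card (c1A (N+1) .f0) + Nat.card (c1A (N+1) .fa) := by
  let G : c1A (N+1) .f0 ⊕ c1A (N+1) .fa →
      {t : (ℕ → ℕ) × (ℕ → ℕ) // c1P (N+1) .f0 t ∨ c1P (N+1) .fa t} := fun x =>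
    match x with
    | .inl t => ⟨t.val, Or.inl t.prop⟩
    | .inr t => ⟨t.val, Or.inr t.prop⟩
  have hbij : Function.Bijective G := by
    constructor
    · intro x y h
      have hval := Subtype.ext_iff.mp h
      rcases x with t | t <;> rcases y with t₂ | t₂
      · exact congrArg Sum.inl (Subtype.ext hval)
      · exfalso
        have h1 := t.prop.2.2
        have h2 := t₂.prop.2.2
        rw [hval, h2] at h1
        cases h1
      · exfalso
        have h1 := t.prop.2.2
        have h2 := t₂.prop.2.2
        rw [hval, h2] at h1
        cases h1
      · exact congrArg Sum.inr (Subtype.ext hval)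
    · rintro ⟨v, hv | hv⟩
      · exact ⟨.inl ⟨v, hv⟩, rfl⟩
      · exact ⟨.inr ⟨v, hv⟩, rfl⟩
  rw [← Nat.card_eq_of_bijective G hbij, Nat.card_sum]

/-- The set `C^{1,N}` of `{0,1}`-tuples `(a_0,…,a_N; b_1,…,b_N)` (with `a_i = b_i = 0` for
`i ≥ N+1` and `b_0 = 0`) satisfying the triangle conditions, the right-neighbor condition,
and the leftmost condition (3), has cardinality `2^N`. -/
theorem card_C1N (N : ℕ) :
    Nat.card {t : (ℕ → ℕ) × (ℕ → ℕ) //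
      (∀ i, t.1 i ≤ 1) ∧ (∀ i, t.2 i ≤ 1) ∧
      (∀ i, N + 1 ≤ i → t.1 i = 0) ∧ (∀ i, N + 1 ≤ i → t.2 i = 0) ∧ t.2 0 = 0 ∧
      (∀ i, t.2 (i + 1) + t.1 (i + 1) + t.1 i ≤ 1) ∧
      (∀ i, t.2 (i + 1) + t.2 i + t.1 i ≤ 1) ∧
      (∀ i, 1 ≤ i → i ≤ N → t.2 i = 1 →
        ∃ j, i < j ∧ j ≤ N ∧ t.1 j = 1 ∧ ∀ s, i + 1 ≤ s → s ≤ j → t.2 s = 0) ∧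
      (∃ j, j ≤ N ∧ t.1 j = 1 ∧ ∀ s, 1 ≤ s → s ≤ j → t.2 s = 0)} = 2 ^ N := by
  have he : ∀ t : (ℕ → ℕ) × (ℕ → ℕ),
      ((∀ i, t.1 i ≤ 1) ∧ (∀ i, t.2 i ≤ 1) ∧
      (∀ i, N + 1 ≤ i → t.1 i = 0) ∧ (∀ i, N + 1 ≤ i → t.2 i = 0) ∧ t.2 0 = 0 ∧
      (∀ i, t.2 (i + 1) + t.1 (i + 1) + t.1 i ≤ 1) ∧
      (∀ i, t.2 (i + 1) + t.2 i + t.1 i ≤ 1) ∧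
      (∀ i, 1 ≤ i → i ≤ N → t.2 i = 1 →
        ∃ j, i < j ∧ j ≤ N ∧ t.1 j = 1 ∧ ∀ s, i + 1 ≤ s → s ≤ j → t.2 s = 0) ∧
      (∃ j, j ≤ N ∧ t.1 j = 1 ∧ ∀ s, 1 ≤ s → s ≤ j → t.2 s = 0)) ↔
      (c1P (N+1) .f0 t ∨ c1P (N+1) .fa t) := by
    intro t
    constructor
    · exact c1H_to_acc
    · rintro (h | h)
      · exact c1acc_to_H h (Or.inl rfl)
      · exact c1acc_to_H h (Or.inr rfl)
  rw [Nat.card_congr (Equiv.subtypeEquivRight he), c1card_acc, (c1card_main N).1]
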